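/- arXiv:1309.4585 — 2 statements merged into one kernel-verified Lean document; each statement's English description precedes it below -/
import Mathlib

section
/- Let φ(x;q) be a continuous function defined for x≥0 and q∈[0,1] such that: (1) for each fixed q, φ(·;q) is positive and periodic with period 1; (2) φ has continuous partial derivatives in x up to order 2 on [0,1]×[0,1]. Let m≥2 be an integer and suppose that for some function c(q)>0 one has φ(x;q)·φ(x+1/m;q)⋯φ(x+(m−1)/m;q) = c(q)·φ(mx;q^{1/m}) for all x≥0 and q∈[0,1]. Then for each fixed q∈[0,1], x ↦ φ(x;q) is constant on ℝ. -/
open Real Set Filter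
open scoped Topology

/-!
Compactness bounds the second derivative of `log φ(·; q)` on `(0, 1)` uniformly in `q`. Taking
logarithms and differentiating the functional equation twice gives
`∑ i < m, (log φ)''((x + i) / m; q ^ m) = m² (log φ)''(x; q)`,
so every bound `B` on `|(log φ)''|` improves to `B / m`, and hence `(log φ)'' = 0`. Thus
`log φ(·; q)` is affine on `[0, 1]`, and periodicity forces its slope to vanish.
-/

theorem eqOn_zero_of_abs_le_div_of_bounded {α : Type*} {g : α → ℝ} {s : Set α} {C r : ℝ}
    (hr : 1 < r) (hC : ∀ a ∈ s, |g a| ≤ C)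
    (hstep : ∀ B, (∀ a ∈ s, |g a| ≤ B) → ∀ a ∈ s, |g a| ≤ B / r) :
    ∀ a ∈ s, g a = 0 := by
  have hpow : ∀ n : ℕ, ∀ a ∈ s, |g a| ≤ C / r ^ n := by
    intro n
    induction n with
    | zero => simpa using hC
    | succ n ih => simpa only [pow_succ, ← div_div] using hstep _ ih
  intro a ha
  have hlim : Tendsto (fun n : ℕ => C / r ^ n) atTop (𝓝 0) :=
    (tendsto_pow_atTop_atTop_of_one_lt hr).const_div_atTop C
  exact abs_nonpos_iff.1 (ge_of_tendsto' hlim fun n => hpow n a ha)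

theorem sum_deriv_comp_add_eq_of_eqOn {ι : Type*} {s : Finset ι} {t : ι → ℝ} {g h : ℝ → ℝ}
    {a b k : ℝ} {V : Set ℝ} (hV : IsOpen V)
    (heq : ∀ y ∈ V, ∑ i ∈ s, g (y + t i) = a + b * h (k * y)) {x : ℝ} (hx : x ∈ V)
    (hg : ∀ i ∈ s, DifferentiableAt ℝ g (x + t i)) (hh : DifferentiableAt ℝ h (k * x)) :
    ∑ i ∈ s, deriv g (x + t i) = b * k * deriv h (k * x) := by
  have hsum : HasDerivAt (fun y => ∑ i ∈ s, g (y + t i)) (∑ i ∈ s, deriv g (x + t i)) x :=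
    HasDerivAt.fun_sum fun i hi => (hg i hi).hasDerivAt.comp_add_const x (t i)
  have hrhs : HasDerivAt (fun y => a + b * h (k * y)) (b * k * deriv h (k * x)) x := by
    have hk : HasDerivAt (fun y => h (k * y)) (deriv h (k * x) * k) x := by
      simpa [Function.comp_def] using hh.hasDerivAt.comp x ((hasDerivAt_id x).const_mul k)
    exact ((hk.const_mul b).const_add a).congr_deriv (by ring)
  exact hsum.unique (hrhs.congr_of_eventuallyEq (eventually_of_mem (hV.mem_nhds hx) heq))

theorem deriv_deriv_log_eq {f : ℝ → ℝ} {U : Set ℝ} (hU : IsOpen U) (hf : ContDiffOn ℝ 2 f U)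
    (hf0 : ∀ y ∈ U, f y ≠ 0) {x : ℝ} (hx : x ∈ U) :
    deriv (deriv fun t => log (f t)) x =
      (deriv (deriv f) x * f x - deriv f x ^ 2) / f x ^ 2 := by
  have hd : ∀ y ∈ U, DifferentiableAt ℝ f y := fun y hy =>
    (hf.differentiableOn (by norm_num) y hy).differentiableAt (hU.mem_nhds hy)
  have hd' : DifferentiableAt ℝ (deriv f) x :=
    ((hf.deriv_of_isOpen hU (m := 1) (by norm_num)).differentiableOn one_ne_zero x
      hx).differentiableAt (hU.mem_nhds hx)
  have hlog : deriv (fun t => log (f t)) =ᶠ[𝓝 x] fun t => deriv f t / f t := by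
    filter_upwards [hU.mem_nhds hx] with y hy using deriv.log (hd y hy) (hf0 y hy)
  rw [hlog.deriv_eq, (hd'.hasDerivAt.fun_div (hd x hx).hasDerivAt (hf0 x hx)).deriv]
  ring

theorem eqOn_Icc_of_deriv_deriv_eq_zero {f : ℝ → ℝ} {a b : ℝ} (hab : a < b)
    (hfc : ContinuousOn f (Icc a b)) (hf : ContDiffOn ℝ 2 f (Ioo a b))
    (hf'' : EqOn (deriv (deriv f)) 0 (Ioo a b)) (hfab : f a = f b) :
    ∀ x ∈ Icc a b, f x = f a := by
  have hd : DifferentiableOn ℝ f (Ioo a b) := hf.differentiableOn (by norm_num)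
  have hd' : DifferentiableOn ℝ (deriv f) (Ioo a b) :=
    (hf.deriv_of_isOpen isOpen_Ioo (m := 1) (by norm_num)).differentiableOn one_ne_zero
  -- Rolle gives a critical point, and `deriv f` is constant on `Ioo a b`.
  obtain ⟨c, hc, hfc0⟩ := exists_deriv_eq_zero hab hfc hfab
  have hf' : ∀ y ∈ Ioo a b, deriv f y = 0 := fun y hy =>
    (isOpen_Ioo.is_const_of_deriv_eq_zero isPreconnected_Ioo hd' hf'' hy hc).trans hfc0
  intro x hx
  rcases hx.1.eq_or_lt with rfl | hax
  · rfl
  obtain ⟨d, hd_mem, hslope⟩ := exists_deriv_eq_slope f hax (hfc.mono (Icc_subset_Icc_right hx.2))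
    (hd.mono (Ioo_subset_Ioo_right hx.2))
  rw [hf' d (Ioo_subset_Ioo_right hx.2 hd_mem), eq_comm, div_eq_zero_iff] at hslope
  rcases hslope with h | h <;> linarith

theorem eq_of_periodic_of_eqOn_Icc {f : ℝ → ℝ} (hper : ∀ x ≥ (0 : ℝ), f (x + 1) = f x)
    (h01 : ∀ x ∈ Icc (0 : ℝ) 1, f x = f 0) : ∀ x ≥ (0 : ℝ), f x = f 0 := by
  have hshift : ∀ n : ℕ, ∀ x ≥ (0 : ℝ), f (x + n) = f x := by
    intro n
    induction n with
    | zero => simp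
    | succ n ih =>
      intro x hx
      rw [Nat.cast_succ, ← add_assoc, hper _ (by positivity), ih x hx]
  intro x hx
  have hfract : x - ⌊x⌋₊ ∈ Icc (0 : ℝ) 1 :=
    ⟨sub_nonneg.2 (Nat.floor_le hx), by linarith [Nat.lt_floor_add_one x]⟩
  rw [← sub_add_cancel x ⌊x⌋₊, hshift _ _ hfract.1, h01 _ hfract]

theorem rpow_one_div_mem_Icc {q : ℝ} (hq : q ∈ Icc (0 : ℝ) 1) (m : ℕ) :
    q ^ ((1 : ℝ) / m) ∈ Icc (0 : ℝ) 1 :=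
  ⟨rpow_nonneg hq.1 _, rpow_le_one hq.1 hq.2 (by positivity)⟩

theorem add_div_mem_Ioo {m i : ℕ} (hi : i < m) {x : ℝ} (hx : x ∈ Ioo (0 : ℝ) (1 / m)) :
    x + (i : ℝ) / m ∈ Ioo (0 : ℝ) 1 := by
  have hm : (0 : ℝ) < m := by exact_mod_cast (Nat.zero_le i).trans_lt hi
  have hi' : (i : ℝ) + 1 ≤ m := by exact_mod_cast hi
  refine ⟨add_pos_of_pos_of_nonneg hx.1 (by positivity), ?_⟩
  calc x + (i : ℝ) / m < 1 / m + i / m := by linarith [hx.2]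
    _ = (i + 1) / m := by ring
    _ ≤ 1 := (div_le_one hm).2 hi'

theorem mul_mem_Ioo_of_mem_Ioo_one_div {k x : ℝ} (hx : x ∈ Ioo (0 : ℝ) (1 / k)) :
    k * x ∈ Ioo (0 : ℝ) 1 := by
  have hk : 0 < k := one_div_pos.1 (hx.1.trans hx.2)
  exact ⟨mul_pos hk hx.1, by rw [mul_comm, ← lt_div_iff₀ hk]; exact hx.2⟩

section FunctionalEquation

variable {φ : ℝ → ℝ → ℝ}

theorem contDiffOn_log_of_pos (hpos : ∀ q ∈ Icc (0 : ℝ) 1, ∀ x ≥ (0 : ℝ), 0 < φ x q)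
    (hC2 : ∀ q ∈ Icc (0 : ℝ) 1, ContDiffOn ℝ 2 (fun x => φ x q) (Icc 0 1))
    {q : ℝ} (hq : q ∈ Icc (0 : ℝ) 1) :
    ContDiffOn ℝ 2 (fun x => log (φ x q)) (Icc 0 1) :=
  (hC2 q hq).log fun x hx => (hpos q hq x hx.1).ne'

theorem exists_bound_deriv_deriv_log (hpos : ∀ q ∈ Icc (0 : ℝ) 1, ∀ x ≥ (0 : ℝ), 0 < φ x q)
    (hC2 : ∀ q ∈ Icc (0 : ℝ) 1, ContDiffOn ℝ 2 (fun x => φ x q) (Icc 0 1))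
    (hC2' : ∀ n : ℕ, n ≤ 2 → ContinuousOn
      (fun p : ℝ × ℝ => iteratedDerivWithin n (fun x => φ x p.2) (Icc 0 1) p.1)
      (Icc 0 1 ×ˢ Icc 0 1)) :
    ∃ C, ∀ q ∈ Icc (0 : ℝ) 1, ∀ x ∈ Ioo (0 : ℝ) 1,
      |deriv (deriv fun t => log (φ t q)) x| ≤ C := by
  have hK : IsCompact (Icc (0 : ℝ) 1 ×ˢ Icc (0 : ℝ) 1) := isCompact_Icc.prod isCompact_Icc
  have hcont : ContinuousOn (fun p : ℝ × ℝ => φ p.1 p.2) (Icc 0 1 ×ˢ Icc 0 1) := by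
    simpa only [iteratedDerivWithin_zero] using hC2' 0 (by norm_num)
  obtain ⟨p₀, hp₀, hmin⟩ := hK.exists_isMinOn ⟨(0, 0), by simp⟩ hcont
  obtain ⟨M₀, hM₀⟩ := hK.exists_bound_of_continuousOn (hC2' 0 (by norm_num))
  obtain ⟨M₁, hM₁⟩ := hK.exists_bound_of_continuousOn (hC2' 1 (by norm_num))
  obtain ⟨M₂, hM₂⟩ := hK.exists_bound_of_continuousOn (hC2' 2 le_rfl)
  set δ := φ p₀.1 p₀.2
  have hδ : 0 < δ := hpos _ hp₀.2 _ hp₀.1.1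
  refine ⟨(M₂ * M₀ + M₁ ^ 2) / δ ^ 2, fun q hq x hx => ?_⟩
  have hxI : x ∈ Icc (0 : ℝ) 1 := Ioo_subset_Icc_self hx
  have hmem : (x, q) ∈ Icc (0 : ℝ) 1 ×ˢ Icc (0 : ℝ) 1 := ⟨hxI, hq⟩
  -- inside the square, the one-sided derivatives of the hypothesis are ordinary ones
  have hiter : ∀ n : ℕ, n ≤ 2 → iteratedDerivWithin n (fun t => φ t q) (Icc 0 1) x =
      iteratedDeriv n (fun t => φ t q) x := fun n hn =>
    iteratedDerivWithin_eq_iteratedDeriv (uniqueDiffOn_Icc zero_lt_one)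
      (((hC2 q hq).contDiffAt (Icc_mem_nhds hx.1 hx.2)).of_le (by exact_mod_cast hn)) hxI
  have h₀ : |φ x q| ≤ M₀ := by simpa using hM₀ _ hmem
  have h₁ : |deriv (fun t => φ t q) x| ≤ M₁ := by
    simpa [hiter 1 (by norm_num)] using hM₁ _ hmem
  have h₂ : |deriv (deriv fun t => φ t q) x| ≤ M₂ := by
    simpa [hiter 2 le_rfl, iteratedDeriv_succ] using hM₂ _ hmem
  have hφ : 0 < φ x q := hpos q hq x hxI.1
  have hnum : |deriv (deriv fun t => φ t q) x * φ x q - deriv (fun t => φ t q) x ^ 2| ≤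
      M₂ * M₀ + M₁ ^ 2 :=
    calc _ ≤ |deriv (deriv fun t => φ t q) x| * |φ x q| + |deriv (fun t => φ t q) x| ^ 2 :=
          (abs_sub _ _).trans_eq (by rw [abs_mul, abs_pow])
      _ ≤ M₂ * M₀ + M₁ ^ 2 := by
          gcongr
          exact (abs_nonneg _).trans h₂
  rw [deriv_deriv_log_eq isOpen_Ioo ((hC2 q hq).mono Ioo_subset_Icc_self)
    (fun y hy => (hpos q hq y hy.1.le).ne') hx, abs_div, abs_of_pos (pow_pos hφ 2)]
  exact div_le_div₀ ((abs_nonneg _).trans hnum) hnum (pow_pos hδ 2)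
    (pow_le_pow_left₀ hδ.le (hmin hmem) 2)

theorem sum_log_eq_log_mul (hpos : ∀ q ∈ Icc (0 : ℝ) 1, ∀ x ≥ (0 : ℝ), 0 < φ x q)
    {m : ℕ} {c : ℝ → ℝ}
    (hfe : ∀ q ∈ Icc (0 : ℝ) 1, ∀ x ≥ (0 : ℝ),
      (∏ i ∈ Finset.range m, φ (x + (i : ℝ) / (m : ℝ)) q) =
        c q * φ ((m : ℝ) * x) (q ^ ((1 : ℝ) / (m : ℝ))))
    {q : ℝ} (hq : q ∈ Icc (0 : ℝ) 1) {x : ℝ} (hx : 0 ≤ x) :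
    ∑ i ∈ Finset.range m, log (φ (x + (i : ℝ) / m) q) =
      log (c q) + log (φ (m * x) (q ^ ((1 : ℝ) / m))) := by
  have hterm : ∀ i ∈ Finset.range m, 0 < φ (x + (i : ℝ) / m) q := fun i _ =>
    hpos q hq _ (by positivity)
  have hprod := Finset.prod_pos hterm
  rw [hfe q hq x hx] at hprod
  rw [← log_prod fun i hi => (hterm i hi).ne', hfe q hq x hx,
    log_mul (left_ne_zero_of_mul hprod.ne') (right_ne_zero_of_mul hprod.ne')]

theorem sum_deriv_deriv_log_eq (hpos : ∀ q ∈ Icc (0 : ℝ) 1, ∀ x ≥ (0 : ℝ), 0 < φ x q)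
    (hC2 : ∀ q ∈ Icc (0 : ℝ) 1, ContDiffOn ℝ 2 (fun x => φ x q) (Icc 0 1))
    {m : ℕ} {c : ℝ → ℝ}
    (hfe : ∀ q ∈ Icc (0 : ℝ) 1, ∀ x ≥ (0 : ℝ),
      (∏ i ∈ Finset.range m, φ (x + (i : ℝ) / (m : ℝ)) q) =
        c q * φ ((m : ℝ) * x) (q ^ ((1 : ℝ) / (m : ℝ))))
    {q : ℝ} (hq : q ∈ Icc (0 : ℝ) 1) {x : ℝ} (hx : x ∈ Ioo (0 : ℝ) (1 / m)) :
    ∑ i ∈ Finset.range m, deriv (deriv fun t => log (φ t q)) (x + (i : ℝ) / m) =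
      (m : ℝ) ^ 2 * deriv (deriv fun t => log (φ t (q ^ ((1 : ℝ) / m)))) (m * x) := by
  have hL : ∀ q ∈ Icc (0 : ℝ) 1, ContDiffOn ℝ 2 (fun t => log (φ t q)) (Ioo 0 1) := fun q hq =>
    (contDiffOn_log_of_pos hpos hC2 hq).mono Ioo_subset_Icc_self
  have hd : ∀ q ∈ Icc (0 : ℝ) 1, ∀ y ∈ Ioo (0 : ℝ) 1,
      DifferentiableAt ℝ (fun t => log (φ t q)) y := fun q hq y hy =>
    ((hL q hq).differentiableOn (by norm_num) y hy).differentiableAt (Ioo_mem_nhds hy.1 hy.2)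
  have hd' : ∀ q ∈ Icc (0 : ℝ) 1, ∀ y ∈ Ioo (0 : ℝ) 1,
      DifferentiableAt ℝ (deriv fun t => log (φ t q)) y := fun q hq y hy =>
    (((hL q hq).deriv_of_isOpen isOpen_Ioo (m := 1) (by norm_num)).differentiableOn one_ne_zero
      y hy).differentiableAt (Ioo_mem_nhds hy.1 hy.2)
  have hq' := rpow_one_div_mem_Icc hq m
  have h1 : ∀ y ∈ Ioo (0 : ℝ) (1 / m),
      ∑ i ∈ Finset.range m, deriv (fun t => log (φ t q)) (y + (i : ℝ) / m) =
        1 * m * deriv (fun t => log (φ t (q ^ ((1 : ℝ) / m)))) (m * y) := fun y hy =>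
    sum_deriv_comp_add_eq_of_eqOn isOpen_Ioo
      (fun z hz => by rw [one_mul]; exact sum_log_eq_log_mul hpos hfe hq hz.1.le) hy
      (fun i hi => hd q hq _ (add_div_mem_Ioo (Finset.mem_range.1 hi) hy))
      (hd _ hq' _ (mul_mem_Ioo_of_mem_Ioo_one_div hy))
  rw [sum_deriv_comp_add_eq_of_eqOn isOpen_Ioo (a := 0)
      (fun z hz => by rw [zero_add]; exact h1 z hz) hx
      (fun i hi => hd' q hq _ (add_div_mem_Ioo (Finset.mem_range.1 hi) hx))
      (hd' _ hq' _ (mul_mem_Ioo_of_mem_Ioo_one_div hx))]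
  ring

theorem deriv_deriv_log_eq_zero (hpos : ∀ q ∈ Icc (0 : ℝ) 1, ∀ x ≥ (0 : ℝ), 0 < φ x q)
    (hC2 : ∀ q ∈ Icc (0 : ℝ) 1, ContDiffOn ℝ 2 (fun x => φ x q) (Icc 0 1))
    (hC2' : ∀ n : ℕ, n ≤ 2 → ContinuousOn
      (fun p : ℝ × ℝ => iteratedDerivWithin n (fun x => φ x p.2) (Icc 0 1) p.1)
      (Icc 0 1 ×ˢ Icc 0 1))
    {m : ℕ} (hm : 2 ≤ m) {c : ℝ → ℝ}
    (hfe : ∀ q ∈ Icc (0 : ℝ) 1, ∀ x ≥ (0 : ℝ),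
      (∏ i ∈ Finset.range m, φ (x + (i : ℝ) / (m : ℝ)) q) =
        c q * φ ((m : ℝ) * x) (q ^ ((1 : ℝ) / (m : ℝ)))) :
    ∀ q ∈ Icc (0 : ℝ) 1, ∀ x ∈ Ioo (0 : ℝ) 1, deriv (deriv fun t => log (φ t q)) x = 0 := by
  obtain ⟨C, hC⟩ := exists_bound_deriv_deriv_log hpos hC2 hC2'
  have hm1 : (1 : ℝ) < m := by exact_mod_cast hm
  have hm0 : (0 : ℝ) < m := zero_lt_one.trans hm1
  suffices h : ∀ p ∈ Icc (0 : ℝ) 1 ×ˢ Ioo (0 : ℝ) 1,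
      deriv (deriv fun t => log (φ t p.1)) p.2 = 0 from fun q hq x hx => h (q, x) ⟨hq, hx⟩
  refine eqOn_zero_of_abs_le_div_of_bounded hm1 (fun p hp => hC _ hp.1 _ hp.2) ?_
  rintro B hB ⟨q, x⟩ ⟨hq, hx⟩
  -- apply the differentiated equation at the parameter `q ^ m`, whose `m`-th root is `q`
  have hqm : q ^ m ∈ Icc (0 : ℝ) 1 := ⟨pow_nonneg hq.1 m, pow_le_one₀ hq.1 hq.2⟩
  have hroot : (q ^ m) ^ ((1 : ℝ) / m) = q := by
    rw [← rpow_natCast, ← rpow_mul hq.1, mul_one_div_cancel hm0.ne', rpow_one]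
  have hxm : x / m ∈ Ioo (0 : ℝ) (1 / m) := ⟨div_pos hx.1 hm0, div_lt_div_of_pos_right hx.2 hm0⟩
  have hsum := sum_deriv_deriv_log_eq hpos hC2 hfe hqm hxm
  rw [hroot, mul_div_cancel₀ _ hm0.ne'] at hsum
  have hbound :
      |∑ i ∈ Finset.range m, deriv (deriv fun t => log (φ t (q ^ m))) (x / m + (i : ℝ) / m)| ≤
        m * B :=
    calc _ ≤ ∑ i ∈ Finset.range m,
          |deriv (deriv fun t => log (φ t (q ^ m))) (x / m + (i : ℝ) / m)| :=
          Finset.abs_sum_le_sum_abs _ _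
      _ ≤ ∑ _i ∈ Finset.range m, B := Finset.sum_le_sum fun i hi =>
          hB (q ^ m, _) ⟨hqm, add_div_mem_Ioo (Finset.mem_range.1 hi) hxm⟩
      _ = m * B := by rw [Finset.sum_const, Finset.card_range, nsmul_eq_mul]
  rw [hsum, abs_mul, abs_of_pos (by positivity)] at hbound
  rw [le_div_iff₀ hm0]
  exact le_of_mul_le_mul_left (by linarith) hm0

end FunctionalEquation

theorem stmt15_general (φ : ℝ → ℝ → ℝ)
    -- for each fixed q, φ(·;q) is positive and periodic with period 1
    (hpos : ∀ q ∈ Icc (0 : ℝ) 1, ∀ x ≥ (0 : ℝ), 0 < φ x q)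
    (hper : ∀ q ∈ Icc (0 : ℝ) 1, ∀ x ≥ (0 : ℝ), φ (x + 1) q = φ x q)
    -- φ has continuous partial derivatives in x up to order 2 on [0,1]×[0,1]
    (hC2 : ∀ q ∈ Icc (0 : ℝ) 1, ContDiffOn ℝ 2 (fun x => φ x q) (Icc 0 1))
    (hC2' : ∀ n : ℕ, n ≤ 2 → ContinuousOn
      (fun p : ℝ × ℝ => iteratedDerivWithin n (fun x => φ x p.2) (Icc 0 1) p.1)
      (Icc 0 1 ×ˢ Icc 0 1))
    (m : ℕ) (hm : 2 ≤ m) (c : ℝ → ℝ)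
    -- the multiplicative functional equation
    (hfe : ∀ q ∈ Icc (0 : ℝ) 1, ∀ x ≥ (0 : ℝ),
      (∏ i ∈ Finset.range m, φ (x + (i : ℝ) / (m : ℝ)) q) =
        c q * φ ((m : ℝ) * x) (q ^ ((1 : ℝ) / (m : ℝ)))) :
    ∀ q ∈ Icc (0 : ℝ) 1, ∀ x ≥ (0 : ℝ), ∀ y ≥ (0 : ℝ), φ x q = φ y q := by
  intro q hq
  have hL := contDiffOn_log_of_pos hpos hC2 hq
  have hlog : ∀ x ∈ Icc (0 : ℝ) 1, log (φ x q) = log (φ 0 q) :=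
    eqOn_Icc_of_deriv_deriv_eq_zero zero_lt_one hL.continuousOn (hL.mono Ioo_subset_Icc_self)
      (deriv_deriv_log_eq_zero hpos hC2 hC2' hm hfe q hq)
      (congrArg log (by simpa using (hper q hq 0 le_rfl).symm))
  have hconst := eq_of_periodic_of_eqOn_Icc (hper q hq) fun x hx =>
    log_injOn_pos (hpos q hq x hx.1) (hpos q hq 0 le_rfl) (hlog x hx)
  intro x hx y hy
  rw [hconst x hx, hconst y hy]

theorem stmt15 (φ : ℝ → ℝ → ℝ)
    -- φ(x;q) is continuous for x ≥ 0 and q ∈ [0,1]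
    (hcont : ContinuousOn (fun p : ℝ × ℝ => φ p.1 p.2) (Ici 0 ×ˢ Icc 0 1))
    -- for each fixed q, φ(·;q) is positive and periodic with period 1
    (hpos : ∀ q ∈ Icc (0 : ℝ) 1, ∀ x ≥ (0 : ℝ), 0 < φ x q)
    (hper : ∀ q ∈ Icc (0 : ℝ) 1, ∀ x ≥ (0 : ℝ), φ (x + 1) q = φ x q)
    -- φ has continuous partial derivatives in x up to order 2 on [0,1]×[0,1]
    (hC2 : ∀ q ∈ Icc (0 : ℝ) 1, ContDiffOn ℝ 2 (fun x => φ x q) (Icc 0 1))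
    (hC2' : ∀ n : ℕ, n ≤ 2 → ContinuousOn
      (fun p : ℝ × ℝ => iteratedDerivWithin n (fun x => φ x p.2) (Icc 0 1) p.1)
      (Icc 0 1 ×ˢ Icc 0 1))
    (m : ℕ) (hm : 2 ≤ m) (c : ℝ → ℝ) (hc : ∀ q ∈ Icc (0 : ℝ) 1, 0 < c q)
    -- the multiplicative functional equation
    (hfe : ∀ q ∈ Icc (0 : ℝ) 1, ∀ x ≥ (0 : ℝ),
      (∏ i ∈ Finset.range m, φ (x + (i : ℝ) / (m : ℝ)) q) =
        c q * φ ((m : ℝ) * x) (q ^ ((1 : ℝ) / (m : ℝ)))) :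
    ∀ q ∈ Icc (0 : ℝ) 1, ∀ x ≥ (0 : ℝ), ∀ y ≥ (0 : ℝ), φ x q = φ y q :=
  stmt15_general φ hpos hper hC2 hC2' m hm c hfe
end

section
/- Let 0<q<1 and let f(x,y) be defined for x,y>0 and satisfy: (i) f(x+1,y+1) = ((1−q^x)(1−q^y)) / ((1−q^{x+y})(1−q^{x+y+1})) · f(x,y); (ii) f(x,y) < f(u,v) whenever x>u>M and y>v>M, for some M≥0; (iii) f(1,1)=1. Then f(x,y) = B_q(x,y) for all x,y>0. -/
open Real Set

/-- The infinite q-Pochhammer symbol `(a;q)_∞ = ∏_{k≥0} (1 - a q^k)`. -/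
noncomputable def qPochInf (a q : ℝ) : ℝ := ∏' k : ℕ, (1 - a * q ^ k)

/-- Jackson's q-gamma function for `0 < q < 1`. -/
noncomputable def qGamma (q x : ℝ) : ℝ :=
  qPochInf q q / qPochInf (q ^ x) q * (1 - q) ^ (1 - x)

/-- The q-beta function `B_q(x,y) = Γ_q(x)Γ_q(y)/Γ_q(x+y)`, for `0 < q < 1`. -/
noncomputable def qBeta (q x y : ℝ) : ℝ := qGamma q x * qGamma q y / qGamma q (x + y)

/-!
Both `f` and `B_q` satisfy the recurrence (i), hence `f(x+n, y+n) B_q(x,y) = B_q(x+n, y+n) f(x,y)`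
for all `n`. The product formula shows `B_q(x+n, y+n) → (1-q)(q;q)_∞`. By (iii) `f` agrees with
`B_q` at the diagonal points `(1+n, 1+n)`, and the monotonicity (ii) squeezes `f(x+n, y+n)` between
diagonal values, so it has the same nonzero limit; comparing limits gives `f(x,y) = B_q(x,y)`.
-/

open Filter Topology

section qPochInf

variable {q : ℝ}

theorem summable_norm_neg_mul_pow (a : ℝ) (hq : |q| < 1) :
    Summable fun k : ℕ => ‖-(a * q ^ k)‖ := by
  simpa only [norm_neg, norm_mul, norm_pow, Real.norm_eq_abs] using
    (summable_geometric_of_lt_one (abs_nonneg q) hq).mul_left |a|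

theorem qPochInf_eq_tprod_one_add (a : ℝ) :
    qPochInf a q = ∏' k : ℕ, (1 + -(a * q ^ k)) := by
  simp only [qPochInf, sub_eq_add_neg]

theorem multipliable_one_sub_mul_pow (a : ℝ) (hq : |q| < 1) :
    Multipliable fun k : ℕ => 1 - a * q ^ k := by
  simpa only [sub_eq_add_neg] using
    multipliable_one_add_of_summable (summable_norm_neg_mul_pow a hq)

theorem qPochInf_eq_one_sub_mul (a : ℝ) (hq : |q| < 1) :
    qPochInf a q = (1 - a) * qPochInf (a * q) q := by
  have hshift : (fun k : ℕ => 1 - a * q ^ (k + 1)) = fun k => 1 - a * q * q ^ k := by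
    funext k
    ring
  have hmul := multipliable_one_sub_mul_pow (a * q) hq
  rw [qPochInf, tprod_eq_zero_mul' (hshift ▸ hmul), hshift, qPochInf, pow_zero, mul_one]

theorem qPochInf_pos {a : ℝ} (hq0 : 0 ≤ q) (hq1 : q < 1) (ha : a < 1) : 0 < qPochInf a q := by
  have hfactor (k : ℕ) : 0 < 1 - a * q ^ k := by
    have hqk : q ^ k ≤ 1 := pow_le_one₀ hq0 hq1.le
    rcases le_or_gt a 0 with ha0 | ha0
    · nlinarith [pow_nonneg hq0 k]
    · nlinarith
  have hq : |q| < 1 := by rwa [abs_of_nonneg hq0]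
  refine (tprod_nonneg fun k => (hfactor k).le).lt_of_ne' ?_
  rw [← qPochInf, qPochInf_eq_tprod_one_add]
  exact tprod_one_add_ne_zero_of_summable (fun k => by simpa [← sub_eq_add_neg] using
    (hfactor k).ne') (summable_norm_neg_mul_pow a hq)

theorem tendsto_qPochInf_nhds_one {α : Type*} {l : Filter α} {a : α → ℝ} (hq : |q| < 1)
    (ha : Tendsto a l (𝓝 0)) : Tendsto (fun i => qPochInf (a i) q) l (𝓝 1) := by
  have hsmall : ∀ᶠ i in l, |a i| ≤ 1 := by
    simpa using ha.abs.eventually (ge_mem_nhds (by simp : |(0 : ℝ)| < 1))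
  have := tendsto_tprod_one_add_of_dominated_convergence (g := fun _ : ℕ => (0 : ℝ))
    (f := fun i k => -(a i * q ^ k)) (bound := fun k => |q| ^ k)
    (summable_geometric_of_lt_one (abs_nonneg q) hq)
    (fun k => by simpa using (ha.mul_const (q ^ k)).neg)
    (hsmall.mono fun i hi k => by
      simpa [abs_mul, abs_pow] using mul_le_of_le_one_left (by positivity) hi)
  simpa only [qPochInf_eq_tprod_one_add, add_zero, tprod_one] using this

theorem tendsto_qPochInf_rpow_atTop (hq0 : 0 < q) (hq1 : q < 1) :
    Tendsto (fun t : ℝ => qPochInf (q ^ t) q) atTop (𝓝 1) :=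
  tendsto_qPochInf_nhds_one (by rw [abs_of_pos hq0]; exact hq1)
    (tendsto_rpow_atTop_of_base_lt_one q (by linarith) hq1)

theorem qPochInf_rpow_pos (hq0 : 0 < q) (hq1 : q < 1) {x : ℝ} (hx : 0 < x) :
    0 < qPochInf (q ^ x) q :=
  qPochInf_pos hq0.le hq1 (rpow_lt_one hq0.le hq1 hx)

theorem qPochInf_rpow_eq_one_sub_mul (hq0 : 0 < q) (hq1 : q < 1) (x : ℝ) :
    qPochInf (q ^ x) q = (1 - q ^ x) * qPochInf (q ^ (x + 1)) q := by
  rw [rpow_add_one hq0.ne']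
  exact qPochInf_eq_one_sub_mul _ (by rw [abs_of_pos hq0]; exact hq1)

end qPochInf

section qBeta

variable {q : ℝ}

theorem qBeta_eq (hq0 : 0 < q) (hq1 : q < 1) (x y : ℝ) :
    qBeta q x y = (1 - q) * qPochInf q q * qPochInf (q ^ (x + y)) q /
      (qPochInf (q ^ x) q * qPochInf (q ^ y) q) := by
  have hc : (0 : ℝ) < 1 - q := by linarith
  have hP : qPochInf q q ≠ 0 := (qPochInf_pos hq0.le hq1 hq1).ne'
  have hpow : (1 - q) ^ (1 - x) * (1 - q) ^ (1 - y) = (1 - q) * (1 - q) ^ (1 - (x + y)) := by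
    rw [← rpow_add hc, show 1 - x + (1 - y) = 1 + (1 - (x + y)) by ring, rpow_add hc, rpow_one]
  have hpow_ne : (1 - q) ^ (1 - (x + y)) ≠ 0 := (rpow_pos_of_pos hc _).ne'
  unfold qBeta qGamma
  field_simp
  rw [hpow]
  ring

theorem qBeta_add_one_add_one (hq0 : 0 < q) (hq1 : q < 1) {x y : ℝ} (hx : 0 < x) (hy : 0 < y) :
    qBeta q (x + 1) (y + 1) =
      (1 - q ^ x) * (1 - q ^ y) / ((1 - q ^ (x + y)) * (1 - q ^ (x + y + 1))) * qBeta q x y := by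
  have hlt {t : ℝ} (ht : 0 < t) : 1 - q ^ t ≠ 0 := (sub_pos.2 (rpow_lt_one hq0.le hq1 ht)).ne'
  have hPx := qPochInf_rpow_pos hq0 hq1 (x := x + 1) (by linarith)
  have hPy := qPochInf_rpow_pos hq0 hq1 (x := y + 1) (by linarith)
  rw [qBeta_eq hq0 hq1, qBeta_eq hq0 hq1, qPochInf_rpow_eq_one_sub_mul hq0 hq1 x,
    qPochInf_rpow_eq_one_sub_mul hq0 hq1 y, qPochInf_rpow_eq_one_sub_mul hq0 hq1 (x + y),
    qPochInf_rpow_eq_one_sub_mul hq0 hq1 (x + y + 1), show x + 1 + (y + 1) = x + y + 1 + 1 by ring]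
  field_simp [hlt hx, hlt hy, hlt (add_pos hx hy), hlt (by linarith : 0 < x + y + 1)]

theorem qBeta_one_one (hq0 : 0 < q) (hq1 : q < 1) : qBeta q 1 1 = 1 := by
  have hc : (1 : ℝ) - q ≠ 0 := by linarith
  have hP2 := qPochInf_rpow_pos hq0 hq1 (x := 1 + 1) (by norm_num)
  have hP := qPochInf_rpow_eq_one_sub_mul hq0 hq1 1
  rw [rpow_one] at hP
  rw [qBeta_eq hq0 hq1, rpow_one, hP]
  field_simp

theorem tendsto_qBeta_add_nat (hq0 : 0 < q) (hq1 : q < 1) (x y : ℝ) :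
    Tendsto (fun n : ℕ => qBeta q (x + n) (y + n)) atTop (𝓝 ((1 - q) * qPochInf q q)) := by
  have hshift (z : ℝ) : Tendsto (fun n : ℕ => z + n) atTop atTop :=
    tendsto_atTop_add_const_left _ z tendsto_natCast_atTop_atTop
  have hP := tendsto_qPochInf_rpow_atTop hq0 hq1
  have := (tendsto_const_nhds (x := (1 - q) * qPochInf q q)).mul
    (hP.comp ((hshift x).atTop_add_atTop (hshift y))) |>.div
    ((hP.comp (hshift x)).mul (hP.comp (hshift y))) (by norm_num)
  simpa only [qBeta_eq hq0 hq1, mul_one, div_one, Function.comp_def, Pi.div_def] using this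

end qBeta

theorem mul_eq_mul_of_add_one_add_one {f g r : ℝ → ℝ → ℝ}
    (hf : ∀ x > (0 : ℝ), ∀ y > (0 : ℝ), f (x + 1) (y + 1) = r x y * f x y)
    (hg : ∀ x > (0 : ℝ), ∀ y > (0 : ℝ), g (x + 1) (y + 1) = r x y * g x y)
    {x y : ℝ} (hx : 0 < x) (hy : 0 < y) (n : ℕ) :
    f (x + n) (y + n) * g x y = g (x + n) (y + n) * f x y := by
  induction n with
  | zero => simp only [Nat.cast_zero, add_zero, mul_comm]
  | succ n ih =>
    simp only [Nat.cast_succ, ← add_assoc]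
    rw [hf _ (by positivity) _ (by positivity), hg _ (by positivity) _ (by positivity),
      mul_assoc, ih, mul_assoc]

theorem tendsto_add_nat_of_tendsto_diag {f : ℝ → ℝ → ℝ} {M L a : ℝ}
    (hf : ∀ x u y v : ℝ, M < u → u < x → M < v → v < y → f x y ≤ f u v)
    (hdiag : Tendsto (fun n : ℕ => f (a + n) (a + n)) atTop (𝓝 L)) (x y : ℝ) :
    Tendsto (fun n : ℕ => f (x + n) (y + n)) atTop (𝓝 L) := by
  obtain ⟨K, hK⟩ := exists_nat_gt (|x - a| + |y - a|)
  have hxK := abs_lt.1 ((le_add_of_nonneg_right (abs_nonneg (y - a))).trans_lt hK)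
  have hyK := abs_lt.1 ((le_add_of_nonneg_left (abs_nonneg (x - a))).trans_lt hK)
  rw [← tendsto_add_atTop_iff_nat K]
  obtain ⟨N, hN⟩ := exists_nat_gt (M - a)
  -- `(x + (n + K), y + (n + K))` lies between the diagonal points at `a + n` and `a + (n + 2K)`
  refine tendsto_of_tendsto_of_tendsto_of_le_of_le' ((tendsto_add_atTop_iff_nat (2 * K)).2 hdiag)
    hdiag ?_ ?_
  all_goals
    filter_upwards [eventually_ge_atTop N] with n hn
    have hn' : (N : ℝ) ≤ n := by exact_mod_cast hn
    apply hf <;> push_cast <;> linarith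

theorem stmt18_general (q : ℝ) (hq0 : 0 < q) (hq1 : q < 1)
    (f : ℝ → ℝ → ℝ) (M : ℝ)
    (hi : ∀ x > (0 : ℝ), ∀ y > (0 : ℝ), f (x + 1) (y + 1) =
      ((1 - q ^ x) * (1 - q ^ y)) / ((1 - q ^ (x + y)) * (1 - q ^ (x + y + 1))) * f x y)
    (hii : ∀ x u y v : ℝ, M < u → u < x → M < v → v < y → f x y < f u v)
    (hiii : f 1 1 = 1) :
    ∀ x > (0 : ℝ), ∀ y > (0 : ℝ), f x y = qBeta q x y := by
  intro x hx y hy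
  have hrec := fun x (hx : 0 < x) y (hy : 0 < y) => qBeta_add_one_add_one hq0 hq1 hx hy
  have hdiag : Tendsto (fun n : ℕ => f (1 + n) (1 + n)) atTop (𝓝 ((1 - q) * qPochInf q q)) :=
    (tendsto_qBeta_add_nat hq0 hq1 1 1).congr fun n => by
      simpa only [hiii, mul_one, qBeta_one_one hq0 hq1] using
        (mul_eq_mul_of_add_one_add_one hi hrec one_pos one_pos n).symm
  have hf_lim := (tendsto_add_nat_of_tendsto_diag (fun x u y v h₁ h₂ h₃ h₄ =>
    (hii x u y v h₁ h₂ h₃ h₄).le) hdiag x y).mul_const (qBeta q x y)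
  have hB_lim := ((tendsto_qBeta_add_nat hq0 hq1 x y).mul_const (f x y)).congr fun n =>
    (mul_eq_mul_of_add_one_add_one hi hrec hx hy n).symm
  have hL : (1 - q) * qPochInf q q ≠ 0 :=
    mul_ne_zero (by linarith) (qPochInf_pos hq0.le hq1 hq1).ne'
  exact mul_left_cancel₀ hL (tendsto_nhds_unique hB_lim hf_lim)

theorem stmt18 (q : ℝ) (hq0 : 0 < q) (hq1 : q < 1)
    (f : ℝ → ℝ → ℝ) (M : ℝ) (hM : 0 ≤ M)
    (hi : ∀ x > (0 : ℝ), ∀ y > (0 : ℝ), f (x + 1) (y + 1) =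
      ((1 - q ^ x) * (1 - q ^ y)) / ((1 - q ^ (x + y)) * (1 - q ^ (x + y + 1))) * f x y)
    (hii : ∀ x u y v : ℝ, M < u → u < x → M < v → v < y → f x y < f u v)
    (hiii : f 1 1 = 1) :
    ∀ x > (0 : ℝ), ∀ y > (0 : ℝ), f x y = qBeta q x y :=
  stmt18_general q hq0 hq1 f M hi hii hiii
end
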